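/- Let G be a finite graph with at least one edge and let k ≥ 1 be an integer. Set n = Γ(G) + 2k − 2 and let K_k[S_n] be the complete multipartite graph with k parts each of size n. Then Γ(K_k[S_n] □ G) ≥ Γ(G) + 2k − 2. (In particular, since Γ(K_k[S_n]) = k, for every graph H with Γ(H) = k of this form, Γ(G □ H) ≥ Γ(G) + 2k − 2.) -/

import Mathlib

open SimpleGraph

/-- A greedy `k`-coloring of `G`: a partition of the vertex set into nonempty stable sets
`S 0, …, S (k-1)` such that for all `j < i`, every vertex of `S i` has a neighbor in `S j`. -/
def IsGreedyColoring {V : Type*} (G : SimpleGraph V) (k : ℕ) (S : Fin k → Set V) : Prop :=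
  (∀ v : V, ∃! i, v ∈ S i) ∧
  (∀ i, (S i).Nonempty) ∧
  (∀ i, ∀ v ∈ S i, ∀ w ∈ S i, ¬ G.Adj v w) ∧
  (∀ i j : Fin k, j < i → ∀ v ∈ S i, ∃ w ∈ S j, G.Adj v w)

/-- The Grundy number `Γ(G)`: the largest `k` such that `G` has a greedy `k`-coloring. -/
noncomputable def grundy {V : Type*} [Fintype V] (G : SimpleGraph V) : ℕ :=
  sSup {k | ∃ S : Fin k → Set V, IsGreedyColoring G k S}

/-- Lexicographic product `G[H]`: `(a,x)` adjacent to `(b,y)` iff `ab ∈ E(G)`,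
or `a = b` and `xy ∈ E(H)`. -/
def lexProd {α β : Type*} (G : SimpleGraph α) (H : SimpleGraph β) :
    SimpleGraph (α × β) where
  Adj x y := G.Adj x.1 y.1 ∨ (x.1 = y.1 ∧ H.Adj x.2 y.2)
  symm := ⟨fun _ _ h => by
    rcases h with h | ⟨h1, h2⟩
    · exact Or.inl (G.symm.symm _ _ h)
    · exact Or.inr ⟨h1.symm, H.symm.symm _ _ h2⟩⟩
  loopless := ⟨fun _ h => by
    rcases h with h | ⟨-, h2⟩
    · exact G.loopless.irrefl _ h
    · exact H.loopless.irrefl _ h2⟩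

/-!
A labelling `f : V → ℕ` of a vertex set `W` that is proper on `W`, and in which every vertex of
`W` sees each smaller value at a neighbour in `W`, gives `Γ ≥ f x + 1` for every `x ∈ W`: extend
it properly to all vertices using huge values, and an extension of least total weight is a
greedy labelling of the whole graph, whose level sets form a greedy colouring.

So it is enough to label part of `K_k[S_n] □ G`. Let `c` be a greedy colouring of `G` with values
`0, …, Γ(G) - 1` and `b` a proper labelling such that every non-isolated `v` has a neighbour `u`
with `c u = b v`. The last part of `K_k[S_n]` carries `c + 2(k - 1)` on each copy of `G`; in part
`q < k - 1` the copy `s` carries `2q` on `c⁻¹(s)` and `2q + 1` on `b⁻¹(s)`. At every non-isolated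
vertex of `G` the parts `q' < q` supply all values below `2q`, and a vertex with `2q + 1` finds
`2q` at a neighbour in its own copy.
-/

structure IsGreedyLabelingOn {V : Type*} (H : SimpleGraph V) (W : Set V) (f : V → ℕ) :
    Prop where
  ne_of_adj : ∀ ⦃x⦄, x ∈ W → ∀ ⦃y⦄, y ∈ W → H.Adj x y → f x ≠ f y
  exists_adj : ∀ ⦃x⦄, x ∈ W → ∀ m < f x, ∃ y ∈ W, H.Adj x y ∧ f y = m

namespace IsGreedyLabelingOn

variable {V : Type*} {H : SimpleGraph V} {W : Set V} {f : V → ℕ}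

theorem exists_extension [Fintype V] (hf : IsGreedyLabelingOn H W f) :
    ∃ h : V → ℕ, IsGreedyLabelingOn H Set.univ h ∧ ∀ x ∈ W, h x = f x := by
  classical
  let E : Set (V → ℕ) := {h | (∀ x ∈ W, h x = f x) ∧ ∀ x y, H.Adj x y → h x ≠ h y}
  have hE : E.Nonempty := by
    obtain ⟨M, hM⟩ := (Set.finite_range f).bddAbove
    have hfM : ∀ x, f x ≤ M := fun x => hM ⟨x, rfl⟩
    refine ⟨fun x => if x ∈ W then f x else M + 1 + Fintype.equivFin V x, fun x hx => if_pos hx,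
      fun x y hxy => ?_⟩
    have hne : (Fintype.equivFin V x : ℕ) ≠ Fintype.equivFin V y :=
      Fin.val_ne_of_ne ((Fintype.equivFin V).injective.ne hxy.ne)
    have := hfM x
    have := hfM y
    by_cases hx : x ∈ W <;> by_cases hy : y ∈ W <;> simp only [hx, hy, if_true, if_false]
    · exact hf.ne_of_adj hx hy hxy
    all_goals omega
  obtain ⟨h, ⟨hW, hproper⟩, hmin⟩ := (measure fun h : V → ℕ => ∑ x, h x).wf.has_min E hE
  refine ⟨h, ⟨fun x _ y _ => hproper x y, fun x _ m hm => ?_⟩, hW⟩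
  by_cases hx : x ∈ W
  · obtain ⟨y, hy, hxy, rfl⟩ := hf.exists_adj hx m (hW x hx ▸ hm)
    exact ⟨y, Set.mem_univ y, hxy, hW y hy⟩
  by_contra! hmiss
  refine hmin (Function.update h x m) ⟨fun y hy => ?_, fun y z hyz => ?_⟩ ?_
  · rw [Function.update_of_ne (ne_of_mem_of_not_mem hy hx)]
    exact hW y hy
  · rcases eq_or_ne y x with rfl | hy
    · rw [Function.update_self, Function.update_of_ne hyz.ne']
      exact (hmiss z (Set.mem_univ z) hyz).symm
    rcases eq_or_ne z x with rfl | hz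
    · rw [Function.update_self, Function.update_of_ne hy]
      exact hmiss y (Set.mem_univ y) hyz.symm
    · rw [Function.update_of_ne hy, Function.update_of_ne hz]
      exact hproper y z hyz
  · show ∑ y, Function.update h x m y < ∑ y, h y
    refine Finset.sum_lt_sum (fun y _ => ?_) ⟨x, Finset.mem_univ x, ?_⟩
    · rcases eq_or_ne y x with rfl | hy
      · simpa using hm.le
      · rw [Function.update_of_ne hy]
    · simpa using hm

theorem isGreedyColoring_levelSets (hf : IsGreedyLabelingOn H Set.univ f) {y : V}
    (hy : ∀ z, f z ≤ f y) : IsGreedyColoring H (f y + 1) fun i => {z | f z = i} := by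
  refine ⟨fun z => ⟨⟨f z, Nat.lt_succ_of_le (hy z)⟩, rfl, fun i hi => Fin.ext hi.symm⟩,
    fun i => ?_, fun i z hz w hw hzw => hf.ne_of_adj trivial trivial hzw (hz.trans hw.symm),
    fun i j hji z hz => ?_⟩
  · rcases (Nat.lt_succ_iff.mp i.isLt).lt_or_eq with hi | hi
    · obtain ⟨z, -, -, hz⟩ := hf.exists_adj (Set.mem_univ y) i hi
      exact ⟨z, hz⟩
    · exact ⟨y, hi.symm⟩
  · obtain ⟨w, -, hzw, hw⟩ := hf.exists_adj (Set.mem_univ z) j (hz ▸ hji)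
    exact ⟨w, hw, hzw⟩

end IsGreedyLabelingOn

theorem IsGreedyColoring.exists_isGreedyLabelingOn
    {V : Type*} {H : SimpleGraph V} {m : ℕ} {S : Fin m → Set V}
    (hS : IsGreedyColoring H m S) :
    ∃ c : V → ℕ, IsGreedyLabelingOn H Set.univ c ∧ (∀ v, c v < m) ∧ ∀ i < m, ∃ v, c v = i := by
  choose c hc using fun v => (hS.1 v).exists
  have hc_eq : ∀ v i, v ∈ S i → c v = i := fun v i hv => (hS.1 v).unique (hc v) hv
  refine ⟨fun v => c v, ⟨fun v _ w _ hvw hcvw => ?_, fun v _ m hm => ?_⟩,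
    fun v => (c v).isLt, fun i hi => ?_⟩
  · exact hS.2.2.1 (c v) v (hc v) w (Fin.ext hcvw ▸ hc w) hvw
  · obtain ⟨w, hw, hvw⟩ := hS.2.2.2 (c v) ⟨m, hm.trans (c v).isLt⟩ hm v (hc v)
    exact ⟨w, trivial, hvw, by simp only [hc_eq w _ hw]⟩
  · obtain ⟨v, hv⟩ := hS.2.1 ⟨i, hi⟩
    exact ⟨v, by simp only [hc_eq v _ hv]⟩

section Grundy

variable {V : Type*} [Fintype V] {H : SimpleGraph V}

theorem IsGreedyColoring.le_card {m : ℕ} {S : Fin m → Set V} (hS : IsGreedyColoring H m S) :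
    m ≤ Fintype.card V := by
  choose rep hrep using hS.2.1
  have hinj : Function.Injective rep := fun i j hij =>
    (hS.1 (rep i)).unique (hrep i) (hij ▸ hrep j)
  simpa using Fintype.card_le_of_injective rep hinj

theorem grundy_bddAbove (H : SimpleGraph V) :
    BddAbove {m | ∃ S : Fin m → Set V, IsGreedyColoring H m S} :=
  ⟨Fintype.card V, fun _ ⟨_, hS⟩ => hS.le_card⟩

theorem IsGreedyColoring.le_grundy {m : ℕ} {S : Fin m → Set V} (hS : IsGreedyColoring H m S) :
    m ≤ grundy H :=
  le_csSup (grundy_bddAbove H) ⟨S, hS⟩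

theorem IsGreedyLabelingOn.le_grundy {W : Set V} {f : V → ℕ} (hf : IsGreedyLabelingOn H W f)
    {x : V} (hx : x ∈ W) : f x + 1 ≤ grundy H := by
  have : Nonempty V := ⟨x⟩
  obtain ⟨h, hh, hhf⟩ := hf.exists_extension
  obtain ⟨y, hy⟩ := Finite.exists_max h
  calc f x + 1 = h x + 1 := by rw [hhf x hx]
    _ ≤ h y + 1 := by gcongr; exact hy x
    _ ≤ grundy H := (hh.isGreedyColoring_levelSets hy).le_grundy

theorem exists_isGreedyColoring_grundy [Nonempty V] (H : SimpleGraph V) :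
    ∃ S : Fin (grundy H) → Set V, IsGreedyColoring H (grundy H) S := by
  have hempty : IsGreedyLabelingOn H ∅ fun _ => 0 := ⟨fun _ h => h.elim, fun _ h => h.elim⟩
  obtain ⟨h, hh, -⟩ := hempty.exists_extension
  obtain ⟨y, hy⟩ := Finite.exists_max h
  exact Nat.sSup_mem (s := {m | ∃ S : Fin m → Set V, IsGreedyColoring H m S})
    ⟨_, _, hh.isGreedyColoring_levelSets hy⟩ (grundy_bddAbove H)

end Grundy

theorem IsGreedyLabelingOn.exists_proper_neighbor_label {α : Type*} [Fintype α]
    {G : SimpleGraph α} {c : α → ℕ} (hc : IsGreedyLabelingOn G Set.univ c) :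
    ∃ b : α → ℕ, (∀ ⦃u v⦄, G.Adj u v → b u ≠ b v) ∧
      ∀ ⦃v⦄, (∃ w, G.Adj v w) → ∃ u, G.Adj v u ∧ c u = b v := by
  classical
  -- `b v = c v - 1` unless `c v = 0`, where `b v` is the largest `c` among the neighbours;
  -- then `b u < c u ≤ b v` for every neighbour `u`, so `b` stays proper
  let top : α → ℕ := fun v => (G.neighborFinset v).sup c
  refine ⟨fun v => if c v = 0 then top v else c v - 1, fun u v huv => ?_, fun v ⟨w, hvw⟩ => ?_⟩
  · have hcuv := hc.ne_of_adj trivial trivial huv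
    have hu : c v ≤ top u := Finset.le_sup ((G.mem_neighborFinset u v).mpr huv)
    have hv : c u ≤ top v := Finset.le_sup ((G.mem_neighborFinset v u).mpr huv.symm)
    dsimp only
    split_ifs <;> omega
  · by_cases hv : c v = 0
    · obtain ⟨u, hu, hcu⟩ := Finset.exists_mem_eq_sup (G.neighborFinset v)
        ⟨w, (G.mem_neighborFinset v w).mpr hvw⟩ c
      exact ⟨u, (G.mem_neighborFinset v u).mp hu, by simp only [hv, if_true, top, hcu]⟩
    · obtain ⟨u, -, hvu, hcu⟩ := hc.exists_adj (Set.mem_univ v) (c v - 1) (by omega)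
      exact ⟨u, hvu, by simp only [hv, if_false, hcu]⟩

theorem lexProd_top_bot_adj {β γ : Type*} {x y : β × γ} :
    (lexProd (⊤ : SimpleGraph β) (⊥ : SimpleGraph γ)).Adj x y ↔ x.1 ≠ y.1 := by
  change x.1 ≠ y.1 ∨ (x.1 = y.1 ∧ False) ↔ _
  simp

section MultipartiteBoxProd

variable {α : Type*} (G : SimpleGraph α) (c b : α → ℕ) (k n : ℕ)

def multipartiteBoxLabel (x : (Fin k × Fin n) × α) : ℕ :=
  if (x.1.1 : ℕ) + 1 = k then c x.2 + 2 * (k - 1)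
  else if c x.2 = x.1.2 then 2 * x.1.1 else 2 * x.1.1 + 1

def multipartiteBoxSupport : Set ((Fin k × Fin n) × α) :=
  {x | (∃ w, G.Adj x.2 w) ∧ ((x.1.1 : ℕ) + 1 = k ∨ c x.2 = x.1.2 ∨ b x.2 = x.1.2)}

variable {G c b k n}

theorem multipartiteBoxProd_adj {x y : (Fin k × Fin n) × α} :
    ((lexProd (⊤ : SimpleGraph (Fin k)) (⊥ : SimpleGraph (Fin n))).boxProd G).Adj x y ↔
      x.1.1 ≠ y.1.1 ∧ x.2 = y.2 ∨ G.Adj x.2 y.2 ∧ x.1 = y.1 := by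
  rw [boxProd_adj, lexProd_top_bot_adj]

variable (hc : IsGreedyLabelingOn G Set.univ c) (hb : ∀ ⦃u v⦄, G.Adj u v → b u ≠ b v)
  (hcb : ∀ ⦃v⦄, (∃ w, G.Adj v w) → ∃ u, G.Adj v u ∧ c u = b v) (hn : ∀ v, c v < n)

include hc hcb hn in
theorem exists_multipartiteBoxLabel_eq {v : α} (hv : ∃ w, G.Adj v w) {m : ℕ}
    (hm : m < 2 * (k - 1)) :
    ∃ y ∈ multipartiteBoxSupport G c b k n, y.2 = v ∧ (y.1.1 : ℕ) = m / 2 ∧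
      multipartiteBoxLabel c k n y = m := by
  obtain ⟨u, hvu, hcu⟩ := hcb hv
  have hcv : c v ≠ b v := hcu ▸ hc.ne_of_adj trivial trivial hvu
  have hbn : b v < n := hcu ▸ hn u
  rcases Nat.even_or_odd' m with ⟨r, rfl | rfl⟩
  · refine ⟨((⟨r, by omega⟩, ⟨c v, hn v⟩), v), ⟨hv, Or.inr (Or.inl rfl)⟩, rfl,
      by dsimp only; omega, ?_⟩
    simp only [multipartiteBoxLabel, if_true]
    rw [if_neg (by omega)]
  · refine ⟨((⟨r, by omega⟩, ⟨b v, hbn⟩), v), ⟨hv, Or.inr (Or.inr rfl)⟩, rfl,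
      by dsimp only; omega, ?_⟩
    simp only [multipartiteBoxLabel, hcv, if_false]
    rw [if_neg (by omega)]

include hc hb in
theorem multipartiteBoxLabel_ne_of_adj {x y : (Fin k × Fin n) × α}
    (hx : x ∈ multipartiteBoxSupport G c b k n) (hy : y ∈ multipartiteBoxSupport G c b k n)
    (hxy : ((lexProd (⊤ : SimpleGraph (Fin k)) (⊥ : SimpleGraph (Fin n))).boxProd G).Adj x y) :
    multipartiteBoxLabel c k n x ≠ multipartiteBoxLabel c k n y := by
  obtain ⟨⟨q, s⟩, v⟩ := x
  obtain ⟨⟨q', s'⟩, v'⟩ := y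
  rcases multipartiteBoxProd_adj.mp hxy with ⟨hq, hvv'⟩ | ⟨hvv', hqs⟩
  · obtain rfl : v = v' := hvv'
    have hq' : (q : ℕ) ≠ q' := Fin.val_ne_of_ne hq
    have := q.isLt
    have := q'.isLt
    simp only [multipartiteBoxLabel]
    split_ifs <;> omega
  · obtain ⟨rfl, rfl⟩ := Prod.mk.inj hqs
    have hcvv' : c v ≠ c v' := hc.ne_of_adj trivial trivial hvv'
    have hbvv' : b v ≠ b v' := hb hvv'
    simp only [multipartiteBoxSupport, Set.mem_ofPred_eq] at hx hy
    simp only [multipartiteBoxLabel]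
    split_ifs <;> omega

include hc hcb hn in
theorem multipartiteBoxLabel_exists_adj {x : (Fin k × Fin n) × α}
    (hx : x ∈ multipartiteBoxSupport G c b k n) {m : ℕ} (hm : m < multipartiteBoxLabel c k n x) :
    ∃ y ∈ multipartiteBoxSupport G c b k n,
      ((lexProd (⊤ : SimpleGraph (Fin k)) (⊥ : SimpleGraph (Fin n))).boxProd G).Adj x y ∧
        multipartiteBoxLabel c k n y = m := by
  obtain ⟨⟨q, s⟩, v⟩ := x
  obtain ⟨hv, hqs⟩ := hx
  have := q.isLt
  have h_other (hmq : m < 2 * min (q : ℕ) (k - 1)) : ∃ y ∈ multipartiteBoxSupport G c b k n,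
      ((lexProd (⊤ : SimpleGraph (Fin k)) (⊥ : SimpleGraph (Fin n))).boxProd G).Adj ((q, s), v) y ∧
        multipartiteBoxLabel c k n y = m := by
    obtain ⟨y, hy, rfl, hyq, hym⟩ :=
      exists_multipartiteBoxLabel_eq (k := k) hc hcb hn hv (m := m) (by omega)
    refine ⟨y, hy, multipartiteBoxProd_adj.mpr (Or.inl ⟨fun h => ?_, rfl⟩), hym⟩
    have : (q : ℕ) = y.1.1 := congrArg Fin.val h
    omega
  simp only [multipartiteBoxLabel] at hm
  split_ifs at hm with hlast hcs
  · by_cases hmk : m < 2 * (k - 1)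
    · exact h_other (by omega)
    obtain ⟨w, -, hvw, hcw⟩ := hc.exists_adj (Set.mem_univ v) (m - 2 * (k - 1)) (by omega)
    refine ⟨((q, s), w), ⟨⟨v, hvw.symm⟩, Or.inl hlast⟩,
      multipartiteBoxProd_adj.mpr (Or.inr ⟨hvw, rfl⟩), ?_⟩
    simp only [multipartiteBoxLabel, hlast, if_true, hcw]
    omega
  · exact h_other (by omega)
  · by_cases hmq : m < 2 * q
    · exact h_other (by omega)
    have hbs : b v = s := by tauto
    obtain ⟨u, hvu, hcu⟩ := hcb hv
    refine ⟨((q, s), u), ⟨⟨v, hvu.symm⟩, Or.inr (Or.inl (hcu.trans hbs))⟩,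
      multipartiteBoxProd_adj.mpr (Or.inr ⟨hvu, rfl⟩), ?_⟩
    simp only [multipartiteBoxLabel, hlast, if_false, hcu, hbs, if_true]
    omega

include hc hb hcb hn in
theorem isGreedyLabelingOn_multipartiteBoxLabel :
    IsGreedyLabelingOn ((lexProd (⊤ : SimpleGraph (Fin k)) (⊥ : SimpleGraph (Fin n))).boxProd G)
      (multipartiteBoxSupport G c b k n) (multipartiteBoxLabel c k n) :=
  ⟨fun _ hx _ hy => multipartiteBoxLabel_ne_of_adj hc hb hx hy,
    fun _ hx _ => multipartiteBoxLabel_exists_adj hc hcb hn hx⟩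

end MultipartiteBoxProd

theorem le_grundy_multipartite_boxProd {α : Type*} [Fintype α] {G : SimpleGraph α} {c : α → ℕ}
    (hc : IsGreedyLabelingOn G Set.univ c) {k n : ℕ} (hk : 1 ≤ k) (hn : ∀ v, c v < n) {v : α}
    (hv : ∃ w, G.Adj v w) :
    c v + 2 * k - 1 ≤
      grundy ((lexProd (⊤ : SimpleGraph (Fin k)) (⊥ : SimpleGraph (Fin n))).boxProd G) := by
  obtain ⟨b, hb, hcb⟩ := hc.exists_proper_neighbor_label
  let x : (Fin k × Fin n) × α := ((⟨k - 1, by omega⟩, ⟨c v, hn v⟩), v)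
  have hlast : (x.1.1 : ℕ) + 1 = k := Nat.sub_add_cancel hk
  have hx : x ∈ multipartiteBoxSupport G c b k n := ⟨hv, Or.inl hlast⟩
  have hle := (isGreedyLabelingOn_multipartiteBoxLabel hc hb hcb hn).le_grundy hx
  rw [multipartiteBoxLabel, if_pos hlast] at hle
  change c v + 2 * (k - 1) + 1 ≤ _ at hle
  omega

/-- Let `G` be a finite graph with at least one edge, `k ≥ 1`, and
`n = Γ(G) + 2k − 2`.  Then `Γ(K_k[S_n] □ G) ≥ Γ(G) + 2k − 2`, where `K_k[S_n]` is the
complete multipartite graph with `k` parts of size `n`. -/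
theorem grundy_boxProd_multipartite_ge {α : Type*} [Fintype α]
    (G : SimpleGraph α) (hG : ∃ u v, G.Adj u v) (k : ℕ) (hk : 1 ≤ k) :
    grundy ((lexProd (⊤ : SimpleGraph (Fin k))
        (⊥ : SimpleGraph (Fin (grundy G + 2 * k - 2)))).boxProd G)
      ≥ grundy G + 2 * k - 2 := by
  obtain ⟨u, w, huw⟩ := hG
  have : Nonempty α := ⟨u⟩
  obtain ⟨S, hS⟩ := exists_isGreedyColoring_grundy G
  obtain ⟨c, hc, hc_lt, hc_surj⟩ := hS.exists_isGreedyLabelingOn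
  have hg : 2 ≤ grundy G := by
    have := hc.ne_of_adj trivial trivial huw
    have := hc_lt u
    have := hc_lt w
    omega
  obtain ⟨v, hv⟩ := hc_surj (grundy G - 1) (by omega)
  obtain ⟨v', -, hvv', -⟩ := hc.exists_adj (Set.mem_univ v) 0 (by omega)
  have := le_grundy_multipartite_boxProd hc hk (n := grundy G + 2 * k - 2)
    (fun v => (hc_lt v).trans_le (by omega)) ⟨v', hvv'⟩
  omega
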